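/- arXiv:1509.01810 — 2 statements merged into one kernel-verified Lean document; each statement's English description precedes it below -/
import Mathlib

section
/- Let N ≥ 3, α > 0, 0 < μ < 2. The mass function M(ω) = N (μ+1)^{1/μ}/μ · ω^{1/μ - 1/2} · ∫_{α/(N√ω)}^{1} (1-t²)^{1/μ-1} dt is strictly monotonically increasing on (α²/N², +∞), tends to 0 as ω → (α²/N²)⁺, and tends to +∞ as ω → +∞. -/
open Real Filter MeasureTheory Set Topology

/-!
Write `massFn N α μ ω = C ω^p F(a / √ω)` with `C > 0`, `p = 1/μ - 1/2 > 0`, `a = α / N` and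
`F u = ∫_u^1 (1 - t²)^q dt`, `q = 1/μ - 1 > -1`. Since `q > -1` the integrand is integrable
at `t = 1`, so `F` is continuous on `[0, 1]`, positive on `[0, 1)`, antitone, and `F 1 = 0`.
As `ω` increases past `a²`, `ω^p` increases strictly while `a / √ω` decreases from `1`, so
`F(a / √ω)` increases from `0`; for large `ω` it stays above `F (1/2) > 0` while `ω^p → ∞`.
-/

/-- The mass of the symmetric stationary state of frequency `ω` on the `N`-star graph with
attractive delta of strength `α` at the vertex. -/
noncomputable def massFn (N : ℕ) (α μ : ℝ) (ω : ℝ) : ℝ :=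
  N * (μ + 1) ^ (1 / μ) / μ * ω ^ (1 / μ - 1 / 2) *
    ∫ t in (α / (N * Real.sqrt ω))..1, (1 - t ^ 2) ^ (1 / μ - 1)

noncomputable def tailIntegral (q u : ℝ) : ℝ := ∫ t in u..1, (1 - t ^ 2) ^ q

section TailIntegral

variable {q : ℝ}

lemma intervalIntegrable_one_sub_sq_rpow (hq : -1 < q) :
    IntervalIntegrable (fun t : ℝ => (1 - t ^ 2) ^ q) volume 0 1 := by
  have hsing : IntervalIntegrable (fun t : ℝ => (1 - t) ^ q) volume 0 1 := by
    simpa using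
      ((intervalIntegral.intervalIntegrable_rpow' (a := 0) (b := 1) hq).comp_sub_left 1).symm
  have hcont : ContinuousOn (fun t : ℝ => (1 + t) ^ q) (uIcc 0 1) := by
    rw [uIcc_of_le zero_le_one]
    exact ContinuousOn.rpow_const (by fun_prop) fun t ht => Or.inl (by linarith [ht.1])
  refine (hsing.mul_continuousOn hcont).congr fun t ht => ?_
  rw [uIoc_of_le zero_le_one] at ht
  show (1 - t) ^ q * (1 + t) ^ q = (1 - t ^ 2) ^ q
  rw [← mul_rpow (by linarith [ht.2]) (by linarith [ht.1])]
  ring_nf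

lemma intervalIntegrable_one_sub_sq_rpow_of_mem (hq : -1 < q) {u v : ℝ}
    (hu : u ∈ Icc (0 : ℝ) 1) (hv : v ∈ Icc (0 : ℝ) 1) :
    IntervalIntegrable (fun t : ℝ => (1 - t ^ 2) ^ q) volume u v := by
  refine (intervalIntegrable_one_sub_sq_rpow hq).mono_set (uIcc_subset_uIcc ?_ ?_) <;>
    rwa [uIcc_of_le zero_le_one]

lemma tailIntegral_pos (hq : -1 < q) {u : ℝ} (hu : u ∈ Ico (0 : ℝ) 1) :
    0 < tailIntegral q u :=
  intervalIntegral.intervalIntegral_pos_of_pos_on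
    (intervalIntegrable_one_sub_sq_rpow_of_mem hq (Ico_subset_Icc_self hu) (right_mem_Icc.2 zero_le_one))
    (fun t ht => rpow_pos_of_pos (by nlinarith [hu.1, ht.1, ht.2]) q) hu.2

lemma tailIntegral_antitoneOn (hq : -1 < q) : AntitoneOn (tailIntegral q) (Icc 0 1) := by
  intro u hu v hv huv
  have hsplit := intervalIntegral.integral_add_adjacent_intervals
    (intervalIntegrable_one_sub_sq_rpow_of_mem hq hu hv)
    (intervalIntegrable_one_sub_sq_rpow_of_mem hq hv (right_mem_Icc.2 zero_le_one))
  have hnonneg : 0 ≤ ∫ t in u..v, (1 - t ^ 2) ^ q :=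
    intervalIntegral.integral_nonneg huv fun t ht =>
      rpow_nonneg (by nlinarith [hu.1, ht.1, ht.2, hv.2]) q
  unfold tailIntegral
  linarith

lemma tendsto_tailIntegral_one (hq : -1 < q) :
    Tendsto (tailIntegral q) (𝓝[Icc 0 1] 1) (𝓝 0) := by
  have hcont : ContinuousOn (tailIntegral q) (Icc 0 1) := by
    have := intervalIntegral.continuousOn_primitive_interval_left (μ := volume)
      ((intervalIntegrable_iff' (by simp)).1 (intervalIntegrable_one_sub_sq_rpow hq))
    rwa [uIcc_of_le zero_le_one] at this
  have hzero : tailIntegral q 1 = 0 := intervalIntegral.integral_same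
  simpa only [ContinuousWithinAt, hzero] using hcont 1 (right_mem_Icc.2 zero_le_one)

end TailIntegral

section DivSqrt

variable {a : ℝ}

lemma div_sqrt_mem_Ioo (ha : 0 < a) {ω : ℝ} (hω : a ^ 2 < ω) : a / √ω ∈ Ioo 0 1 := by
  have hlt : a < √ω := lt_sqrt_of_sq_lt hω
  exact ⟨div_pos ha (ha.trans hlt), (div_lt_one (ha.trans hlt)).2 hlt⟩

lemma strictAntiOn_div_sqrt (ha : 0 < a) : StrictAntiOn (fun ω => a / √ω) (Ioi 0) :=
  fun _ hω₁ _ _ h => div_lt_div_of_pos_left ha (sqrt_pos.2 hω₁) (sqrt_lt_sqrt (le_of_lt hω₁) h)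

lemma tendsto_div_sqrt_nhdsGT (ha : 0 < a) :
    Tendsto (fun ω => a / √ω) (𝓝[>] (a ^ 2)) (𝓝[Icc 0 1] 1) := by
  refine tendsto_nhdsWithin_iff.2 ⟨?_, ?_⟩
  · have hsqrt : √(a ^ 2) = a := sqrt_sq ha.le
    have hcont : ContinuousAt (fun ω => a / √ω) (a ^ 2) :=
      continuousAt_const.div continuous_sqrt.continuousAt (by rw [hsqrt]; exact ha.ne')
    have h1 : a / √(a ^ 2) = 1 := by rw [hsqrt, div_self ha.ne']
    simpa only [h1] using hcont.tendsto.mono_left nhdsWithin_le_nhds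
  · filter_upwards [self_mem_nhdsWithin] with ω hω
    exact Ioo_subset_Icc_self (div_sqrt_mem_Ioo ha hω)

end DivSqrt

section Scaling

variable {F : ℝ → ℝ} {a p : ℝ}

lemma strictMonoOn_rpow_mul_comp_div_sqrt (ha : 0 < a) (hp : 0 < p)
    (hF : AntitoneOn F (Icc 0 1)) (hFpos : ∀ u ∈ Ico (0 : ℝ) 1, 0 < F u) :
    StrictMonoOn (fun ω => ω ^ p * F (a / √ω)) (Ioi (a ^ 2)) := by
  intro ω₁ hω₁ ω₂ hω₂ h
  have hpos₁ : 0 < ω₁ := (pow_pos ha 2).trans hω₁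
  have hx₁ := div_sqrt_mem_Ioo ha hω₁
  have hx₂ := div_sqrt_mem_Ioo ha hω₂
  have hFle : F (a / √ω₁) ≤ F (a / √ω₂) :=
    hF (Ioo_subset_Icc_self hx₂) (Ioo_subset_Icc_self hx₁)
      (strictAntiOn_div_sqrt ha hpos₁ (hpos₁.trans h) h).le
  exact mul_lt_mul (rpow_lt_rpow hpos₁.le h hp) hFle (hFpos _ (Ioo_subset_Ico_self hx₁))
    (rpow_nonneg (hpos₁.trans h).le p)

lemma tendsto_rpow_mul_comp_div_sqrt_nhdsGT (ha : 0 < a)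
    (hF : Tendsto F (𝓝[Icc 0 1] 1) (𝓝 0)) :
    Tendsto (fun ω => ω ^ p * F (a / √ω)) (𝓝[>] (a ^ 2)) (𝓝 0) := by
  have hpow : Tendsto (fun ω : ℝ => ω ^ p) (𝓝[>] (a ^ 2)) (𝓝 ((a ^ 2) ^ p)) :=
    (continuousAt_rpow_const _ p (Or.inl (by positivity))).tendsto.mono_left nhdsWithin_le_nhds
  simpa using hpow.mul (hF.comp (tendsto_div_sqrt_nhdsGT ha))

lemma tendsto_rpow_mul_comp_div_sqrt_atTop (ha : 0 ≤ a) (hp : 0 < p)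
    (hF : AntitoneOn F (Icc 0 1)) (hFpos : ∀ u ∈ Ico (0 : ℝ) 1, 0 < F u) :
    Tendsto (fun ω => ω ^ p * F (a / √ω)) atTop atTop := by
  have hhalf : (1 / 2 : ℝ) ∈ Icc 0 1 := ⟨by norm_num, by norm_num⟩
  have hsmall : ∀ᶠ ω in atTop, a / √ω ∈ Icc 0 (1 / 2) := by
    have h0 : Tendsto (fun ω => a / √ω) atTop (𝓝 0) :=
      tendsto_const_nhds.div_atTop tendsto_sqrt_atTop
    filter_upwards [h0.eventually (Iio_mem_nhds (by norm_num : (0 : ℝ) < 1 / 2)),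
      eventually_ge_atTop 0] with ω hω hω0
    exact ⟨by positivity, le_of_lt hω⟩
  refine tendsto_atTop_mono' atTop ?_
    ((tendsto_rpow_atTop hp).atTop_mul_const (hFpos (1 / 2) ⟨by norm_num, by norm_num⟩))
  filter_upwards [hsmall, eventually_ge_atTop 0] with ω hω hω0
  exact mul_le_mul_of_nonneg_left
    (hF ⟨hω.1, hω.2.trans hhalf.2⟩ hhalf hω.2) (rpow_nonneg hω0 p)

end Scaling

lemma massFn_eq (N : ℕ) (α μ : ℝ) :
    massFn N α μ = fun ω => N * (μ + 1) ^ (1 / μ) / μ *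
      (ω ^ (1 / μ - 1 / 2) * tailIntegral (1 / μ - 1) (α / N / √ω)) := by
  ext ω
  rw [massFn, mul_assoc, div_mul_eq_div_div, tailIntegral]

theorem massFn_strictMono_and_limits (N : ℕ) (hN : 3 ≤ N) (α μ : ℝ)
    (hα : 0 < α) (hμ : 0 < μ) (hμ2 : μ < 2) :
    StrictMonoOn (massFn N α μ) (Set.Ioi (α ^ 2 / N ^ 2)) ∧
    Tendsto (massFn N α μ) (nhdsWithin (α ^ 2 / N ^ 2) (Set.Ioi (α ^ 2 / N ^ 2))) (nhds 0) ∧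
    Tendsto (massFn N α μ) atTop atTop := by
  have hN0 : (0 : ℝ) < N := by exact_mod_cast (by omega : 0 < N)
  have ha : 0 < α / N := div_pos hα hN0
  have hinv : 1 / 2 < 1 / μ := one_div_lt_one_div_of_lt hμ hμ2
  have hp : 0 < 1 / μ - 1 / 2 := by linarith
  have hq : -1 < 1 / μ - 1 := by linarith
  have hC : 0 < N * (μ + 1) ^ (1 / μ) / μ := by
    have := rpow_pos_of_pos (by linarith : 0 < μ + 1) (1 / μ)
    positivity
  have hF := tailIntegral_antitoneOn hq
  have hFpos : ∀ u ∈ Ico (0 : ℝ) 1, 0 < tailIntegral (1 / μ - 1) u :=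
    fun _ hu => tailIntegral_pos hq hu
  rw [massFn_eq, ← div_pow]
  refine ⟨fun ω₁ h₁ ω₂ h₂ h => mul_lt_mul_of_pos_left
      (strictMonoOn_rpow_mul_comp_div_sqrt ha hp hF hFpos h₁ h₂ h) hC, ?_, ?_⟩
  · simpa using (tendsto_rpow_mul_comp_div_sqrt_nhdsGT ha (tendsto_tailIntegral_one hq)).const_mul
      (N * (μ + 1) ^ (1 / μ) / μ)
  · exact (tendsto_rpow_mul_comp_div_sqrt_atTop ha.le hp hF hFpos).const_mul_atTop hC
end

section
/- Let X be a normed space, E : X → ℝ a functional, Σ : D ⊆ X → X a map, and Ψ ∈ D with ΣΨ = Ψ. Assume: (i) Σ is continuous at Ψ; (ii) E(ΣΦ) ≤ E(Φ) for all Φ ∈ D, with equality iff Φ lies in a set S containing Ψ on which Σ acts as the identity; (iii) Ψ is a strict local minimizer of E restricted to Σ(D). Then Ψ is a strict local minimizer of E on D: there exists δ > 0 such that for all Φ ∈ D with 0 < ‖Φ − Ψ‖ < δ, E(Φ) > E(Ψ). -/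
/-- Abstract reduction argument: a continuous energy-decreasing retraction transfers strict
local minimality on its image to strict local minimality in the full space. -/
theorem strict_local_min_via_retraction {X : Type*} [NormedAddCommGroup X]
    (E : X → ℝ) (D : Set X) (T : X → X) (S : Set X) (Ψ : X)
    (hΨD : Ψ ∈ D) (hΨS : Ψ ∈ S) (hfix : T Ψ = Ψ)
    (hcont : ContinuousWithinAt T D Ψ)
    (hdec : ∀ Φ ∈ D, E (T Φ) ≤ E Φ)
    (heq : ∀ Φ ∈ D, (E (T Φ) = E Φ ↔ Φ ∈ S))
    (hid : ∀ Φ ∈ S, T Φ = Φ)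
    (hmin : ∃ ε > 0, ∀ Φ ∈ T '' D, Φ ≠ Ψ → ‖Φ - Ψ‖ < ε → E Ψ < E Φ) :
    ∃ δ > 0, ∀ Φ ∈ D, 0 < ‖Φ - Ψ‖ → ‖Φ - Ψ‖ < δ → E Ψ < E Φ := by
  obtain ⟨ε, hε, hmin⟩ := hmin
  rw [Metric.continuousWithinAt_iff] at hcont
  obtain ⟨δ, hδ, hδ'⟩ := hcont ε hε
  refine ⟨δ, hδ, fun Φ hΦD hpos hlt => ?_⟩
  have hTclose : ‖T Φ - Ψ‖ < ε := by
    have := hδ' hΦD (show dist Φ Ψ < δ by rwa [dist_eq_norm])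
    rwa [dist_eq_norm, hfix] at this
  by_cases hTΨ : T Φ = Ψ
  · have hΦS : Φ ∉ S := fun hS => by
      have := hid Φ hS
      rw [this] at hTΨ
      simp [hTΨ] at hpos
    have : E (T Φ) < E Φ :=
      lt_of_le_of_ne (hdec Φ hΦD) (fun h => hΦS ((heq Φ hΦD).mp h))
    rwa [hTΨ] at this
  · exact lt_of_lt_of_le (hmin (T Φ) ⟨Φ, hΦD, rfl⟩ hTΨ hTclose) (hdec Φ hΦD)
end
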